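/- Let Ψ, Φ : ℝ⁴ → ℝ³ be smooth with Φ·Ψ nowhere zero on a domain U, and suppose there exist a smooth vector function Ξ and a smooth function h on U with Φ/(Φ·Ψ) = rot Ξ and Ψ/(Φ·Ψ) = ∇h − ∂Ξ/∂y. Then (Ψ,Φ) satisfies the Jacobi equations on U, and the modular vector field Z_Λ satisfies Z_Λ = Λ^#(dH) with H = −ln|Φ·Ψ| being a Hamiltonian for it, i.e. (rot Ψ + ∂Φ/∂y) = Ψ × ∇H − (∂H/∂y)Φ and −div Φ = ∇H·Φ. -/

import Mathlib

noncomputable section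

abbrev V3 : Type := Fin 3 → ℝ
abbrev SF : Type := V3 → ℝ → ℝ
abbrev VF : Type := V3 → ℝ → V3

def dot (a b : V3) : ℝ := a 0 * b 0 + a 1 * b 1 + a 2 * b 2

def cross (a b : V3) : V3 :=
  ![a 1 * b 2 - a 2 * b 1, a 2 * b 0 - a 0 * b 2, a 0 * b 1 - a 1 * b 0]

def pdx (i : Fin 3) (f : SF) (x : V3) (y : ℝ) : ℝ :=
  fderiv ℝ (fun x' => f x' y) x (Pi.single i 1)

def pdy (f : SF) (x : V3) (y : ℝ) : ℝ := deriv (fun y' => f x y') y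

def grad (f : SF) (x : V3) (y : ℝ) : V3 := fun i => pdx i f x y

def vpdy (V : VF) (x : V3) (y : ℝ) : V3 := fun i => pdy (fun x y => V x y i) x y

def divx (V : VF) (x : V3) (y : ℝ) : ℝ := ∑ i : Fin 3, pdx i (fun x y => V x y i) x y

def rot (V : VF) (x : V3) (y : ℝ) : V3 :=
  ![pdx 1 (fun x y => V x y 2) x y - pdx 2 (fun x y => V x y 1) x y,
    pdx 2 (fun x y => V x y 0) x y - pdx 0 (fun x y => V x y 2) x y,
    pdx 0 (fun x y => V x y 1) x y - pdx 1 (fun x y => V x y 0) x y]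

def SmoothF (f : SF) : Prop := ContDiff ℝ (⊤ : ℕ∞) fun p : V3 × ℝ => f p.1 p.2
def SmoothV (V : VF) : Prop := ContDiff ℝ (⊤ : ℕ∞) fun p : V3 × ℝ => V p.1 p.2

def pbrak (Ψ Φ : VF) (f g : SF) : SF := fun x y =>
  dot (Ψ x y) (cross (grad f x y) (grad g x y)) +
    dot (Φ x y) (pdy f x y • grad g x y - pdy g x y • grad f x y)

def JacobiEqs (Ψ Φ : VF) : Prop :=
  (∀ x y, dot (Ψ x y) (rot Ψ x y + vpdy Φ x y) = pdy (fun x y => dot (Ψ x y) (Φ x y)) x y) ∧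
  (∀ x y, cross (Φ x y) (rot Ψ x y + vpdy Φ x y) + divx Φ x y • Ψ x y
      = grad (fun x y => dot (Ψ x y) (Φ x y)) x y)

def XHx (Ψ Φ : VF) (H : SF) : VF := fun x y =>
  cross (Ψ x y) (grad H x y) - pdy H x y • Φ x y

def XHy (Φ : VF) (H : SF) : SF := fun x y => dot (grad H x y) (Φ x y)

def Casimir (Ψ Φ : VF) (k : SF) : Prop :=
  ∀ x y, cross (Ψ x y) (grad k x y) - pdy k x y • Φ x y = 0 ∧ dot (grad k x y) (Φ x y) = 0

def LD (W : VF) (b : SF) (f : SF) : SF := fun x y =>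
  dot (W x y) (grad f x y) + b x y * pdy f x y

def Fn (f : SF) : V3 × ℝ → ℝ := fun q => f q.1 q.2
def ee (i : Fin 3) : V3 × ℝ := (Pi.single i 1, 0)
def ey : V3 × ℝ := ((0:V3), 1)
def fd (f : SF) (w : V3 × ℝ) : SF := fun x y => fderiv ℝ (Fn f) (x, y) w

def Mfn (Φ Ψ : VF) : SF := fun x y => dot (Φ x y) (Ψ x y)
def Gfn (h : SF) (Ξ : VF) (b : Fin 3) : SF :=
  fun x y => fd h (ee b) x y - fd (fun x y => Ξ x y b) ey x y
def Rfn (Ξ : VF) (b : Fin 3) : SF :=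
  fun x y => fd (fun x y => Ξ x y (b + 2)) (ee (b + 1)) x y
    - fd (fun x y => Ξ x y (b + 1)) (ee (b + 2)) x y

lemma smooth_cmp {V : VF} (hV : SmoothV V) (b : Fin 3) : SmoothF (fun x y => V x y b) :=
  contDiff_pi.mp hV b

lemma smooth_M {Φ Ψ : VF} (hΦ : SmoothV Φ) (hΨ : SmoothV Ψ) : SmoothF (Mfn Φ Ψ) := by
  have h1 := smooth_cmp hΦ; have h2 := smooth_cmp hΨ
  exact (((h1 0).mul (h2 0)).add ((h1 1).mul (h2 1))).add ((h1 2).mul (h2 2))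

lemma pdx_eq' {f : SF} {L : (V3 × ℝ) →L[ℝ] ℝ} {x y} (hf : HasFDerivAt (Fn f) L (x, y)) (i : Fin 3) :
    pdx i f x y = L (ee i) := by
  have h1 : HasFDerivAt (fun x' => f x' y) (L.comp (ContinuousLinearMap.inl ℝ V3 ℝ)) x :=
    hf.comp (f := fun e : V3 => (e, y)) x (hasFDerivAt_prodMk_left x y)
  rw [pdx, h1.fderiv]; simp [ee]

lemma pdy_eq' {f : SF} {L : (V3 × ℝ) →L[ℝ] ℝ} {x y} (hf : HasFDerivAt (Fn f) L (x, y)) :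
    pdy f x y = L ey := by
  have h1 : HasFDerivAt (fun y' => f x y') (L.comp (ContinuousLinearMap.inr ℝ V3 ℝ)) y :=
    hf.comp y (hasFDerivAt_prodMk_right x y)
  rw [pdy, deriv, h1.fderiv]; simp [ey]

lemma pdx_eq {f : SF} {x y} (hf : DifferentiableAt ℝ (Fn f) (x, y)) (i : Fin 3) :
    pdx i f x y = fderiv ℝ (Fn f) (x, y) (ee i) := pdx_eq' hf.hasFDerivAt i

lemma pdy_eq {f : SF} {x y} (hf : DifferentiableAt ℝ (Fn f) (x, y)) :
    pdy f x y = fderiv ℝ (Fn f) (x, y) ey := pdy_eq' hf.hasFDerivAt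

lemma smoothF_fd {f : SF} (hf : SmoothF f) (w : V3 × ℝ) : SmoothF (fd f w) := by
  have h1 : ContDiff ℝ (⊤ : ℕ∞) (fderiv ℝ (Fn f)) := hf.fderiv_right (le_refl _)
  exact h1.clm_apply contDiff_const

lemma fd_swap {f : SF} (hf : SmoothF f) (q : V3 × ℝ) (v w : V3 × ℝ) :
    fderiv ℝ (Fn (fd f w)) q v = fderiv ℝ (Fn (fd f v)) q w := by
  have hd : ∀ z, HasFDerivAt (Fn f) (fderiv ℝ (Fn f) z) z := fun z =>
    (hf.differentiable (by simp) z).hasFDerivAt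
  have h1 : ContDiff ℝ (⊤ : ℕ∞) (fderiv ℝ (Fn f)) := hf.fderiv_right (le_refl _)
  have h2 : HasFDerivAt (fderiv ℝ (Fn f)) (fderiv ℝ (fderiv ℝ (Fn f)) q) q :=
    (h1.differentiable (by simp) q).hasFDerivAt
  have key : ∀ u : V3 × ℝ, fderiv ℝ (Fn (fd f u)) q
      = (ContinuousLinearMap.apply ℝ ℝ u).comp (fderiv ℝ (fderiv ℝ (Fn f)) q) :=
    fun u => (((ContinuousLinearMap.apply ℝ ℝ u).hasFDerivAt.comp q h2)).fderiv
  rw [key, key]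
  exact second_derivative_symmetric hd h2 v w

lemma smooth_G {h : SF} {Ξ : VF} (hh : SmoothF h) (hΞ : SmoothV Ξ) (b : Fin 3) :
    SmoothF (Gfn h Ξ b) :=
  (smoothF_fd hh (ee b)).sub (smoothF_fd (smooth_cmp hΞ b) ey)

lemma smooth_R {Ξ : VF} (hΞ : SmoothV Ξ) (b : Fin 3) : SmoothF (Rfn Ξ b) :=
  (smoothF_fd (smooth_cmp hΞ (b + 2)) (ee (b + 1))).sub
    (smoothF_fd (smooth_cmp hΞ (b + 1)) (ee (b + 2)))

lemma fderiv_mul_fn {A B C : SF} (hA : SmoothF A) (hB : SmoothF B) {q : V3 × ℝ}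
    (hev : Fn C =ᶠ[nhds q] fun r => Fn A r * Fn B r) (v : V3 × ℝ) :
    fderiv ℝ (Fn C) q v = fderiv ℝ (Fn A) q v * B q.1 q.2 + A q.1 q.2 * fderiv ℝ (Fn B) q v := by
  have dA : DifferentiableAt ℝ (Fn A) q := hA.differentiable (by simp) q
  have dB : DifferentiableAt ℝ (Fn B) q := hB.differentiable (by simp) q
  rw [hev.fderiv_eq, fderiv_fun_mul dA dB]
  simp [Fn]; ring

lemma fderiv_sub_fn {A B : SF} (hA : SmoothF A) (hB : SmoothF B) (q : V3 × ℝ) (v : V3 × ℝ) :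
    fderiv ℝ (Fn (fun x y => A x y - B x y)) q v = fderiv ℝ (Fn A) q v - fderiv ℝ (Fn B) q v := by
  have : Fn (fun x y => A x y - B x y) = fun r => Fn A r - Fn B r := rfl
  have dA : DifferentiableAt ℝ (Fn A) q := hA.differentiable (by simp) q
  have dB : DifferentiableAt ℝ (Fn B) q := hB.differentiable (by simp) q
  rw [this, fderiv_fun_sub dA dB]
  simp

lemma key (Ψ Φ Ξ : VF) (h : SF)
    (hΨ : SmoothV Ψ) (hΦ : SmoothV Φ) (hΞ : SmoothV Ξ) (hh : SmoothF h)
    (U : Set (V3 × ℝ)) (hU : IsOpen U)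
    (hne : ∀ x y, (x, y) ∈ U → dot (Φ x y) (Ψ x y) ≠ 0)
    (hrot : ∀ x y, (x, y) ∈ U → (dot (Φ x y) (Ψ x y))⁻¹ • Φ x y = rot Ξ x y)
    (hgrad : ∀ x y, (x, y) ∈ U →
      (dot (Φ x y) (Ψ x y))⁻¹ • Ψ x y = grad h x y - vpdy Ξ x y)
    (x : V3) (y : ℝ) (hp : (x, y) ∈ U) :
    (dot (Ψ x y) (rot Ψ x y + vpdy Φ x y) = pdy (fun x y => dot (Ψ x y) (Φ x y)) x y) ∧
    (cross (Φ x y) (rot Ψ x y + vpdy Φ x y) + divx Φ x y • Ψ x y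
        = grad (fun x y => dot (Ψ x y) (Φ x y)) x y) ∧
    (rot Ψ x y + vpdy Φ x y
        = cross (Ψ x y) (grad (fun x y => -Real.log |dot (Φ x y) (Ψ x y)|) x y)
            - pdy (fun x y => -Real.log |dot (Φ x y) (Ψ x y)|) x y • Φ x y) ∧
    (-(divx Φ x y) = dot (grad (fun x y => -Real.log |dot (Φ x y) (Ψ x y)|) x y) (Φ x y)) := by
  have n01 : ((0:Fin 3)+1) = 1 := rfl
  have n02 : ((0:Fin 3)+2) = 2 := rfl
  have n11 : ((1:Fin 3)+1) = 2 := rfl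
  have n12 : ((1:Fin 3)+2) = 0 := rfl
  have n21 : ((2:Fin 3)+1) = 0 := rfl
  have n22 : ((2:Fin 3)+2) = 1 := rfl
  have hμ0 : Mfn Φ Ψ x y ≠ 0 := hne x y hp
  have hMs : SmoothF (Mfn Φ Ψ) := smooth_M hΦ hΨ
  have hMdA : DifferentiableAt ℝ (Fn (Mfn Φ Ψ)) (x, y) := hMs.differentiable (by simp) _
  have hhdA : ∀ x' y', DifferentiableAt ℝ (Fn h) (x', y') :=
    fun x' y' => hh.differentiable (by simp) _
  have hΞdA : ∀ (b : Fin 3) x' y', DifferentiableAt ℝ (Fn (fun x y => Ξ x y b)) (x', y') :=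
    fun b x' y' => (smooth_cmp hΞ b).differentiable (by simp) _
  -- values of rot Ξ and grad h - vpdy Ξ
  have hRval : ∀ (x' : V3) (y' : ℝ) (b : Fin 3), rot Ξ x' y' b = Rfn Ξ b x' y' := by
    intro x' y' b
    fin_cases b
    · show pdx 1 (fun x y => Ξ x y 2) x' y' - pdx 2 (fun x y => Ξ x y 1) x' y' = Rfn Ξ 0 x' y'
      simp only [Rfn, n01, n02, fd]
      rw [pdx_eq (hΞdA 2 x' y') 1, pdx_eq (hΞdA 1 x' y') 2]
    · show pdx 2 (fun x y => Ξ x y 0) x' y' - pdx 0 (fun x y => Ξ x y 2) x' y' = Rfn Ξ 1 x' y'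
      simp only [Rfn, n11, n12, fd]
      rw [pdx_eq (hΞdA 0 x' y') 2, pdx_eq (hΞdA 2 x' y') 0]
    · show pdx 0 (fun x y => Ξ x y 1) x' y' - pdx 1 (fun x y => Ξ x y 0) x' y' = Rfn Ξ 2 x' y'
      simp only [Rfn, n21, n22, fd]
      rw [pdx_eq (hΞdA 1 x' y') 0, pdx_eq (hΞdA 0 x' y') 1]
  have hGval : ∀ (x' : V3) (y' : ℝ) (b : Fin 3),
      grad h x' y' b - vpdy Ξ x' y' b = Gfn h Ξ b x' y' := by
    intro x' y' b
    show pdx b h x' y' - pdy (fun x y => Ξ x y b) x' y' = _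
    simp only [Gfn, fd]
    rw [pdx_eq (hhdA x' y') b, pdy_eq (hΞdA b x' y')]
  have hΦU : ∀ x' y', (x', y') ∈ U → ∀ b : Fin 3,
      Φ x' y' b = Mfn Φ Ψ x' y' * Rfn Ξ b x' y' := by
    intro x' y' hq b
    have h1 := congrFun (hrot x' y' hq) b
    simp only [Pi.smul_apply, smul_eq_mul] at h1
    rw [hRval x' y' b] at h1
    have h2 := hne x' y' hq
    field_simp at h1
    rw [h1]; simp only [Mfn]
  have hΨU : ∀ x' y', (x', y') ∈ U → ∀ b : Fin 3,
      Ψ x' y' b = Mfn Φ Ψ x' y' * Gfn h Ξ b x' y' := by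
    intro x' y' hq b
    have h1 := congrFun (hgrad x' y' hq) b
    simp only [Pi.smul_apply, smul_eq_mul, Pi.sub_apply] at h1
    rw [hGval x' y' b] at h1
    have h2 := hne x' y' hq
    field_simp at h1
    rw [h1]; simp only [Mfn]
  have hΦv : ∀ b : Fin 3, Φ x y b = Mfn Φ Ψ x y * Rfn Ξ b x y := hΦU x y hp
  have hΨv : ∀ b : Fin 3, Ψ x y b = Mfn Φ Ψ x y * Gfn h Ξ b x y := hΨU x y hp
  -- eventual equalities
  have hevΦ : ∀ b : Fin 3, Fn (fun x y => Φ x y b)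
      =ᶠ[nhds (x, y)] fun r => Fn (Mfn Φ Ψ) r * Fn (Rfn Ξ b) r := by
    intro b
    filter_upwards [hU.mem_nhds hp] with q hq
    exact hΦU q.1 q.2 (by simpa using hq) b
  have hevΨ : ∀ b : Fin 3, Fn (fun x y => Ψ x y b)
      =ᶠ[nhds (x, y)] fun r => Fn (Mfn Φ Ψ) r * Fn (Gfn h Ξ b) r := by
    intro b
    filter_upwards [hU.mem_nhds hp] with q hq
    exact hΨU q.1 q.2 (by simpa using hq) b
  -- derivative expansions
  have hDR : ∀ (b : Fin 3) (v : V3 × ℝ), fderiv ℝ (Fn (Rfn Ξ b)) (x, y) v =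
      fderiv ℝ (Fn (fd (fun x y => Ξ x y (b+2)) (ee (b+1)))) (x, y) v
      - fderiv ℝ (Fn (fd (fun x y => Ξ x y (b+1)) (ee (b+2)))) (x, y) v :=
    fun b v => fderiv_sub_fn (smoothF_fd (smooth_cmp hΞ (b+2)) (ee (b+1)))
      (smoothF_fd (smooth_cmp hΞ (b+1)) (ee (b+2))) (x, y) v
  have hDG : ∀ (b : Fin 3) (v : V3 × ℝ), fderiv ℝ (Fn (Gfn h Ξ b)) (x, y) v =
      fderiv ℝ (Fn (fd h (ee b))) (x, y) v
      - fderiv ℝ (Fn (fd (fun x y => Ξ x y b) ey)) (x, y) v :=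
    fun b v => fderiv_sub_fn (smoothF_fd hh (ee b))
      (smoothF_fd (smooth_cmp hΞ b) ey) (x, y) v
  have hpdxΨ : ∀ (i b : Fin 3), pdx i (fun x y => Ψ x y b) x y =
      fderiv ℝ (Fn (Mfn Φ Ψ)) (x, y) (ee i) * Gfn h Ξ b x y
      + Mfn Φ Ψ x y * (fderiv ℝ (Fn (fd h (ee b))) (x, y) (ee i)
          - fderiv ℝ (Fn (fd (fun x y => Ξ x y b) ey)) (x, y) (ee i)) := by
    intro i b
    have d : DifferentiableAt ℝ (Fn (fun x y => Ψ x y b)) (x, y) :=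
      (smooth_cmp hΨ b).differentiable (by simp) _
    rw [pdx_eq d i, fderiv_mul_fn hMs (smooth_G hh hΞ b) (hevΨ b) (ee i), hDG b (ee i)]
  have hpdxΦ : ∀ (i b : Fin 3), pdx i (fun x y => Φ x y b) x y =
      fderiv ℝ (Fn (Mfn Φ Ψ)) (x, y) (ee i) * Rfn Ξ b x y
      + Mfn Φ Ψ x y * fderiv ℝ (Fn (Rfn Ξ b)) (x, y) (ee i) := by
    intro i b
    have d : DifferentiableAt ℝ (Fn (fun x y => Φ x y b)) (x, y) :=
      (smooth_cmp hΦ b).differentiable (by simp) _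
    rw [pdx_eq d i, fderiv_mul_fn hMs (smooth_R hΞ b) (hevΦ b) (ee i)]
  have hpdyΦ : ∀ b : Fin 3, pdy (fun x y => Φ x y b) x y =
      fderiv ℝ (Fn (Mfn Φ Ψ)) (x, y) ey * Rfn Ξ b x y
      + Mfn Φ Ψ x y * fderiv ℝ (Fn (Rfn Ξ b)) (x, y) ey := by
    intro b
    have d : DifferentiableAt ℝ (Fn (fun x y => Φ x y b)) (x, y) :=
      (smooth_cmp hΦ b).differentiable (by simp) _
    rw [pdy_eq d, fderiv_mul_fn hMs (smooth_R hΞ b) (hevΦ b) ey]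
  -- derivatives of the dot product function
  have hMe : (fun x y => dot (Ψ x y) (Φ x y)) = Mfn Φ Ψ := by
    funext a b; simp only [Mfn, dot]; ring
  have hpdyM : pdy (fun x y => dot (Ψ x y) (Φ x y)) x y
      = fderiv ℝ (Fn (Mfn Φ Ψ)) (x, y) ey := by
    rw [hMe, pdy_eq hMdA]
  have hpdxM : ∀ b : Fin 3, pdx b (fun x y => dot (Ψ x y) (Φ x y)) x y
      = fderiv ℝ (Fn (Mfn Φ Ψ)) (x, y) (ee b) := by
    intro b; rw [hMe, pdx_eq hMdA b]
  -- derivatives of H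
  have hlog : HasFDerivAt (Fn (fun x y => -Real.log |dot (Φ x y) (Ψ x y)|))
      (-((Mfn Φ Ψ x y)⁻¹ • fderiv ℝ (Fn (Mfn Φ Ψ)) (x, y))) (x, y) := by
    have e1 : Fn (fun x y => -Real.log |dot (Φ x y) (Ψ x y)|)
        = fun q => -Real.log (Fn (Mfn Φ Ψ) q) := by
      funext q; simp [Fn, Mfn, Real.log_abs]
    rw [e1]
    exact (hMdA.hasFDerivAt.log hμ0).neg
  have hpdxH : ∀ b : Fin 3, pdx b (fun x y => -Real.log |dot (Φ x y) (Ψ x y)|) x y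
      = -((Mfn Φ Ψ x y)⁻¹ * fderiv ℝ (Fn (Mfn Φ Ψ)) (x, y) (ee b)) := by
    intro b; rw [pdx_eq' hlog b]; simp
  have hpdyH : pdy (fun x y => -Real.log |dot (Φ x y) (Ψ x y)|) x y
      = -((Mfn Φ Ψ x y)⁻¹ * fderiv ℝ (Fn (Mfn Φ Ψ)) (x, y) ey) := by
    rw [pdy_eq' hlog]; simp
  -- the relation μ (R·G) = 1
  have hrel : Mfn Φ Ψ x y * (Rfn Ξ 0 x y * Gfn h Ξ 0 x y + Rfn Ξ 1 x y * Gfn h Ξ 1 x y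
      + Rfn Ξ 2 x y * Gfn h Ξ 2 x y) = 1 := by
    apply mul_left_cancel₀ hμ0
    have e : Mfn Φ Ψ x y = Φ x y 0 * Ψ x y 0 + Φ x y 1 * Ψ x y 1 + Φ x y 2 * Ψ x y 2 := rfl
    rw [hΦv 0, hΨv 0, hΦv 1, hΨv 1, hΦv 2, hΨv 2] at e
    rw [mul_one]
    linear_combination -e
  -- the modular vector field components
  have hZ0 : rot Ψ x y 0 + vpdy Φ x y 0 =
      (fderiv ℝ (Fn (Mfn Φ Ψ)) (x, y) (ee 1) * Gfn h Ξ 2 x y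
        - fderiv ℝ (Fn (Mfn Φ Ψ)) (x, y) (ee 2) * Gfn h Ξ 1 x y)
      + fderiv ℝ (Fn (Mfn Φ Ψ)) (x, y) ey * Rfn Ξ 0 x y := by
    simp only [rot, vpdy, Matrix.cons_val_zero]
    rw [hpdxΨ 1 2, hpdxΨ 2 1, hpdyΦ 0, hDR 0 ey]
    simp only [n01, n02]
    rw [fd_swap (smooth_cmp hΞ 2) (x, y) ey (ee 1),
      fd_swap (smooth_cmp hΞ 1) (x, y) ey (ee 2),
      fd_swap hh (x, y) (ee 1) (ee 2)]
    ring
  have hZ1 : rot Ψ x y 1 + vpdy Φ x y 1 =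
      (fderiv ℝ (Fn (Mfn Φ Ψ)) (x, y) (ee 2) * Gfn h Ξ 0 x y
        - fderiv ℝ (Fn (Mfn Φ Ψ)) (x, y) (ee 0) * Gfn h Ξ 2 x y)
      + fderiv ℝ (Fn (Mfn Φ Ψ)) (x, y) ey * Rfn Ξ 1 x y := by
    simp only [rot, vpdy, Matrix.cons_val_one, Matrix.cons_val_zero, Matrix.head_cons]
    rw [hpdxΨ 2 0, hpdxΨ 0 2, hpdyΦ 1, hDR 1 ey]
    simp only [n11, n12]
    rw [fd_swap (smooth_cmp hΞ 0) (x, y) ey (ee 2),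
      fd_swap (smooth_cmp hΞ 2) (x, y) ey (ee 0),
      fd_swap hh (x, y) (ee 2) (ee 0)]
    ring
  have hZ2 : rot Ψ x y 2 + vpdy Φ x y 2 =
      (fderiv ℝ (Fn (Mfn Φ Ψ)) (x, y) (ee 0) * Gfn h Ξ 1 x y
        - fderiv ℝ (Fn (Mfn Φ Ψ)) (x, y) (ee 1) * Gfn h Ξ 0 x y)
      + fderiv ℝ (Fn (Mfn Φ Ψ)) (x, y) ey * Rfn Ξ 2 x y := by
    simp only [rot, vpdy, Matrix.cons_val_two, Matrix.tail_cons, Matrix.head_cons]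
    rw [hpdxΨ 0 1, hpdxΨ 1 0, hpdyΦ 2, hDR 2 ey]
    simp only [n21, n22]
    rw [fd_swap (smooth_cmp hΞ 1) (x, y) ey (ee 0),
      fd_swap (smooth_cmp hΞ 0) (x, y) ey (ee 1),
      fd_swap hh (x, y) (ee 0) (ee 1)]
    ring
  -- divergence
  have hdiv : divx Φ x y =
      fderiv ℝ (Fn (Mfn Φ Ψ)) (x, y) (ee 0) * Rfn Ξ 0 x y
      + fderiv ℝ (Fn (Mfn Φ Ψ)) (x, y) (ee 1) * Rfn Ξ 1 x y
      + fderiv ℝ (Fn (Mfn Φ Ψ)) (x, y) (ee 2) * Rfn Ξ 2 x y := by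
    simp only [divx, Fin.sum_univ_three]
    rw [hpdxΦ 0 0, hpdxΦ 1 1, hpdxΦ 2 2, hDR 0 (ee 0), hDR 1 (ee 1), hDR 2 (ee 2)]
    simp only [n01, n02, n11, n12, n21, n22]
    rw [fd_swap (smooth_cmp hΞ 2) (x, y) (ee 0) (ee 1),
      fd_swap (smooth_cmp hΞ 1) (x, y) (ee 0) (ee 2),
      fd_swap (smooth_cmp hΞ 0) (x, y) (ee 1) (ee 2)]
    ring
  refine ⟨?_, ?_, ?_, ?_⟩
  · -- Jacobi 1
    rw [hpdyM]
    simp only [dot, Pi.add_apply]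
    rw [hZ0, hZ1, hZ2, hΨv 0, hΨv 1, hΨv 2]
    linear_combination (fderiv ℝ (Fn (Mfn Φ Ψ)) (x, y) ey) * hrel
  · -- Jacobi 2
    funext c
    fin_cases c
    · show (cross (Φ x y) (rot Ψ x y + vpdy Φ x y) + divx Φ x y • Ψ x y) 0
          = grad (fun x y => dot (Ψ x y) (Φ x y)) x y 0
      simp only [Pi.add_apply, Pi.smul_apply, smul_eq_mul, cross, grad, Matrix.cons_val_zero]
      rw [hZ1, hZ2, hdiv, hΦv 1, hΦv 2, hΨv 0, hpdxM 0]
      linear_combination (fderiv ℝ (Fn (Mfn Φ Ψ)) (x, y) (ee 0)) * hrel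
    · show (cross (Φ x y) (rot Ψ x y + vpdy Φ x y) + divx Φ x y • Ψ x y) 1
          = grad (fun x y => dot (Ψ x y) (Φ x y)) x y 1
      simp only [Pi.add_apply, Pi.smul_apply, smul_eq_mul, cross, grad,
        Matrix.cons_val_one, Matrix.cons_val_zero, Matrix.head_cons]
      rw [hZ2, hZ0, hdiv, hΦv 2, hΦv 0, hΨv 1, hpdxM 1]
      linear_combination (fderiv ℝ (Fn (Mfn Φ Ψ)) (x, y) (ee 1)) * hrel
    · show (cross (Φ x y) (rot Ψ x y + vpdy Φ x y) + divx Φ x y • Ψ x y) 2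
          = grad (fun x y => dot (Ψ x y) (Φ x y)) x y 2
      simp only [Pi.add_apply, Pi.smul_apply, smul_eq_mul, cross, grad,
        Matrix.cons_val_two, Matrix.tail_cons, Matrix.head_cons]
      rw [hZ0, hZ1, hdiv, hΦv 0, hΦv 1, hΨv 2, hpdxM 2]
      linear_combination (fderiv ℝ (Fn (Mfn Φ Ψ)) (x, y) (ee 2)) * hrel
  · -- modular eq 1
    funext c
    fin_cases c
    · show (rot Ψ x y + vpdy Φ x y) 0
          = (cross (Ψ x y) (grad (fun x y => -Real.log |dot (Φ x y) (Ψ x y)|) x y)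
              - pdy (fun x y => -Real.log |dot (Φ x y) (Ψ x y)|) x y • Φ x y) 0
      simp only [Pi.add_apply, Pi.sub_apply, Pi.smul_apply, smul_eq_mul, cross, grad,
        Matrix.cons_val_zero]
      rw [hZ0, hpdxH 2, hpdxH 1, hpdyH, hΨv 1, hΨv 2, hΦv 0]
      field_simp
      ring
    · show (rot Ψ x y + vpdy Φ x y) 1
          = (cross (Ψ x y) (grad (fun x y => -Real.log |dot (Φ x y) (Ψ x y)|) x y)
              - pdy (fun x y => -Real.log |dot (Φ x y) (Ψ x y)|) x y • Φ x y) 1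
      simp only [Pi.add_apply, Pi.sub_apply, Pi.smul_apply, smul_eq_mul, cross, grad,
        Matrix.cons_val_one, Matrix.cons_val_zero, Matrix.head_cons]
      rw [hZ1, hpdxH 0, hpdxH 2, hpdyH, hΨv 2, hΨv 0, hΦv 1]
      field_simp
      ring
    · show (rot Ψ x y + vpdy Φ x y) 2
          = (cross (Ψ x y) (grad (fun x y => -Real.log |dot (Φ x y) (Ψ x y)|) x y)
              - pdy (fun x y => -Real.log |dot (Φ x y) (Ψ x y)|) x y • Φ x y) 2
      simp only [Pi.add_apply, Pi.sub_apply, Pi.smul_apply, smul_eq_mul, cross, grad,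
        Matrix.cons_val_two, Matrix.tail_cons, Matrix.head_cons]
      rw [hZ2, hpdxH 1, hpdxH 0, hpdyH, hΨv 0, hΨv 1, hΦv 2]
      field_simp
      ring
  · -- modular eq 2
    show -(divx Φ x y)
        = pdx 0 (fun x y => -Real.log |dot (Φ x y) (Ψ x y)|) x y * Φ x y 0
        + pdx 1 (fun x y => -Real.log |dot (Φ x y) (Ψ x y)|) x y * Φ x y 1
        + pdx 2 (fun x y => -Real.log |dot (Φ x y) (Ψ x y)|) x y * Φ x y 2
    rw [hdiv, hpdxH 0, hpdxH 1, hpdxH 2, hΦv 0, hΦv 1, hΦv 2]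
    field_simp
    ring

theorem stmt17 (Ψ Φ Ξ : VF) (h : SF)
    (hΨ : SmoothV Ψ) (hΦ : SmoothV Φ) (hΞ : SmoothV Ξ) (hh : SmoothF h)
    (U : Set (V3 × ℝ)) (hU : IsOpen U)
    (hne : ∀ x y, (x, y) ∈ U → dot (Φ x y) (Ψ x y) ≠ 0)
    (hrot : ∀ x y, (x, y) ∈ U → (dot (Φ x y) (Ψ x y))⁻¹ • Φ x y = rot Ξ x y)
    (hgrad : ∀ x y, (x, y) ∈ U →
      (dot (Φ x y) (Ψ x y))⁻¹ • Ψ x y = grad h x y - vpdy Ξ x y) :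
    (∀ x y, (x, y) ∈ U →
      dot (Ψ x y) (rot Ψ x y + vpdy Φ x y)
        = pdy (fun x y => dot (Ψ x y) (Φ x y)) x y ∧
      cross (Φ x y) (rot Ψ x y + vpdy Φ x y) + divx Φ x y • Ψ x y
        = grad (fun x y => dot (Ψ x y) (Φ x y)) x y) ∧
    (∀ x y, (x, y) ∈ U →
      rot Ψ x y + vpdy Φ x y
          = cross (Ψ x y) (grad (fun x y => -Real.log |dot (Φ x y) (Ψ x y)|) x y)
              - pdy (fun x y => -Real.log |dot (Φ x y) (Ψ x y)|) x y • Φ x y ∧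
      -(divx Φ x y)
          = dot (grad (fun x y => -Real.log |dot (Φ x y) (Ψ x y)|) x y) (Φ x y)) := by
  refine ⟨fun x y hxy => ?_, fun x y hxy => ?_⟩
  · obtain ⟨a, b, _, _⟩ := key Ψ Φ Ξ h hΨ hΦ hΞ hh U hU hne hrot hgrad x y hxy
    exact ⟨a, b⟩
  · obtain ⟨_, _, c, d⟩ := key Ψ Φ Ξ h hΨ hΦ hΞ hh U hU hne hrot hgrad x y hxy
    exact ⟨c, d⟩
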